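/- Let 0 < p₀ < p < p₁ ≤ ∞. For every f ∈ L^{p,∞}(X), writing f₀ = f·χ_{{|f| > f*(1)}} and f₁ = f - f₀, there is a constant C(p,p₀,p₁) such that ‖f₀‖_{L^{p₀,1}(X)} + ‖f₁‖_{L^{p₁,1}(X)} ≤ C(p,p₀,p₁) ‖f‖_{L^{p,∞}(X)}. In particular L^{p,r}(X) ⊆ L^{p₀,1}(X) + L^{p₁,1}(X) for every 0 < r ≤ ∞. -/

import Mathlib

/-!
Let `M = ‖f‖_{L^{p,∞}}`, so that `f*(t) ≤ M t^{-1/p}`. The set `{|f| > f*(1)}` has measure at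
most `1`, hence `f₀*` vanishes on `[1, ∞)` and is at most `M t^{-1/p}` on `(0, 1]`, where
`t^{1/p₀ - 1/p - 1}` is integrable because `p₀ < p`. Since `|f₁| ≤ min (|f|, f*(1))`, we get
`f₁* ≤ f*(1) ≤ M` on `(0, 1]` (which alone settles `p₁ = ∞`) and `f₁*(t) ≤ M t^{-1/p}` on
`(1, ∞)`, where `t^{1/p₁ - 1/p - 1}` is integrable because `p < p₁`.
For the inclusion, `‖f‖_{L^{p,∞}} ≲ ‖f‖_{L^{p,r}}`: as `f*` is decreasing,
`(t^{1/p} f*(t))^r ≲ ∫₀ᵗ (s^{1/p} f*(s))^r ds/s`.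
-/

open MeasureTheory Filter Set Topology ENNReal

noncomputable section
namespace Paper

variable {α ε : Type*} [MeasurableSpace α]

/-- Decreasing rearrangement of `f` with respect to `μ`. -/
def rearr [NNNorm ε] (μ : Measure α) (f : α → ε) (t : ℝ≥0∞) : ℝ≥0∞ :=
  sInf {s : ℝ≥0∞ | μ {x | s < (‖f x‖₊ : ℝ≥0∞)} ≤ t}

/-- Lorentz quasinorm `‖f‖_{L^{p,q}(μ)}` (with the convention `L^{∞,q} = L^∞`). -/
def lorentzNorm [NNNorm ε] (μ : Measure α) (p q : ℝ≥0∞) (f : α → ε) : ℝ≥0∞ :=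
  if p = ∞ then rearr μ f 0
  else if q = ∞ then ⨆ t : ℝ≥0∞, t ^ (1 / p).toReal * rearr μ f t
  else (∫⁻ t in Ioi (0 : ℝ),
      (ENNReal.ofReal t ^ (1 / p).toReal * rearr μ f (ENNReal.ofReal t)) ^ q.toReal
        / ENNReal.ofReal t) ^ (1 / q.toReal)

section Rearrangement

variable [NNNorm ε] {μ : Measure α} {f : α → ε} {s t : ℝ≥0∞}

lemma rearr_le_of_measure_le (h : μ {x | s < ‖f x‖ₑ} ≤ t) : rearr μ f t ≤ s :=
  sInf_le h

lemma rearr_antitone : Antitone (rearr μ f) :=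
  fun _ _ hst => sInf_le_sInf fun _ hs => hs.trans hst

lemma rearr_le_rearr_of_enorm_le {ε' : Type*} [NNNorm ε'] {g : α → ε'}
    (h : ∀ x, ‖g x‖ₑ ≤ ‖f x‖ₑ) (t : ℝ≥0∞) : rearr μ g t ≤ rearr μ f t :=
  sInf_le_sInf fun _ hs => (measure_mono fun x hx => lt_of_lt_of_le hx (h x)).trans hs

lemma rearr_le_of_enorm_le (h : ∀ x, ‖f x‖ₑ ≤ s) : rearr μ f t ≤ s :=
  rearr_le_of_measure_le <| by
    simp [show {x | s < ‖f x‖ₑ} = ∅ from eq_empty_of_forall_notMem fun x hx => (h x).not_gt hx]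

lemma rearr_top : rearr μ f ∞ = 0 :=
  nonpos_iff_eq_zero.mp (rearr_le_of_measure_le le_top)

-- The infimum defining `rearr` is attained, by continuity of `μ` from below.
lemma measure_rearr_lt_le (μ : Measure α) (f : α → ε) (t : ℝ≥0∞) :
    μ {x | rearr μ f t < ‖f x‖ₑ} ≤ t := by
  obtain ⟨u, hu_anti, -, hu_lim, hu_mem⟩ :=
    (isGLB_sInf {s | μ {x | s < ‖f x‖ₑ} ≤ t}).exists_seq_antitone_tendsto ⟨∞, by simp⟩
  have hunion : {x | rearr μ f t < ‖f x‖ₑ} ⊆ ⋃ n, {x | u n < ‖f x‖ₑ} := fun x hx =>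
    mem_iUnion.mpr ((hu_lim.eventually (gt_mem_nhds hx)).exists)
  calc μ {x | rearr μ f t < ‖f x‖ₑ} ≤ μ (⋃ n, {x | u n < ‖f x‖ₑ}) := measure_mono hunion
    _ = ⨆ n, μ {x | u n < ‖f x‖ₑ} :=
      Monotone.measure_iUnion fun m n hmn x hx => lt_of_le_of_lt (hu_anti hmn) hx
    _ ≤ t := iSup_le hu_mem

end Rearrangement

section Integrals

lemma ofReal_rpow_mul_div_self {s : ℝ} (hs : 0 < s) (c : ℝ) (x : ℝ≥0∞) :
    ENNReal.ofReal s ^ c * x / ENNReal.ofReal s = ENNReal.ofReal (s ^ (c - 1)) * x := by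
  rw [ENNReal.ofReal_rpow_of_pos hs, Real.rpow_sub_one hs.ne', ENNReal.ofReal_div_of_pos hs,
    div_eq_mul_inv, div_eq_mul_inv]
  ring

open intervalIntegral in
lemma lintegral_Ioc_zero_rpow {b c : ℝ} (hb : -1 < b) (hc : 0 < c) :
    ∫⁻ s in Ioc (0 : ℝ) c, ENNReal.ofReal (s ^ b) = ENNReal.ofReal (c ^ (b + 1) / (b + 1)) := by
  rw [← ofReal_integral_eq_lintegral_ofReal (intervalIntegrable_rpow' hb).1
    ((ae_restrict_iff' measurableSet_Ioc).mpr (ae_of_all _ fun x hx => Real.rpow_nonneg hx.1.le b)),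
    ← integral_of_le hc.le, integral_rpow (Or.inl hb), Real.zero_rpow (by linarith), sub_zero]

lemma lintegral_Ioi_rpow {b c : ℝ} (hb : b < -1) (hc : 0 < c) :
    ∫⁻ s in Ioi c, ENNReal.ofReal (s ^ b) = ENNReal.ofReal (-c ^ (b + 1) / (b + 1)) := by
  rw [← ofReal_integral_eq_lintegral_ofReal (integrableOn_Ioi_rpow_of_lt hb hc)
    ((ae_restrict_iff' measurableSet_Ioi).mpr
      (ae_of_all _ fun x hx => Real.rpow_nonneg (hc.le.trans (le_of_lt hx)) b)),
    integral_Ioi_rpow_of_lt hb hc]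

variable {φ : ℝ → ℝ≥0∞} {b c : ℝ} {M : ℝ≥0∞}

lemma ofReal_rpow_mul_div_self_le {t : ℝ} (ht : 0 < t)
    (hφ : φ t ≤ M * ENNReal.ofReal (t ^ (-b))) :
    ENNReal.ofReal t ^ c * φ t / ENNReal.ofReal t ≤ M * ENNReal.ofReal (t ^ (c - b - 1)) :=
  calc ENNReal.ofReal t ^ c * φ t / ENNReal.ofReal t
      ≤ ENNReal.ofReal (t ^ (c - 1)) * (M * ENNReal.ofReal (t ^ (-b))) := by
        rw [ofReal_rpow_mul_div_self ht]; gcongr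
    _ = M * ENNReal.ofReal (t ^ (c - b - 1)) := by
        rw [mul_left_comm, ← ENNReal.ofReal_mul (by positivity), ← Real.rpow_add ht]
        ring_nf

lemma setLIntegral_Ioc_zero_one_le (hbc : b < c)
    (hφ : ∀ t ∈ Ioc (0 : ℝ) 1, φ t ≤ M * ENNReal.ofReal (t ^ (-b))) :
    ∫⁻ t in Ioc (0 : ℝ) 1, ENNReal.ofReal t ^ c * φ t / ENNReal.ofReal t
      ≤ ENNReal.ofReal (1 / (c - b)) * M :=
  calc ∫⁻ t in Ioc (0 : ℝ) 1, ENNReal.ofReal t ^ c * φ t / ENNReal.ofReal t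
      ≤ ∫⁻ t in Ioc (0 : ℝ) 1, M * ENNReal.ofReal (t ^ (c - b - 1)) :=
        setLIntegral_mono' measurableSet_Ioc fun t ht => ofReal_rpow_mul_div_self_le ht.1 (hφ t ht)
    _ = ENNReal.ofReal (1 / (c - b)) * M := by
        rw [lintegral_const_mul _ (by fun_prop), lintegral_Ioc_zero_rpow (by linarith) one_pos,
          mul_comm]
        norm_num

lemma setLIntegral_Ioi_one_le (hcb : c < b)
    (hφ : ∀ t ∈ Ioi (1 : ℝ), φ t ≤ M * ENNReal.ofReal (t ^ (-b))) :
    ∫⁻ t in Ioi (1 : ℝ), ENNReal.ofReal t ^ c * φ t / ENNReal.ofReal t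
      ≤ ENNReal.ofReal (1 / (b - c)) * M :=
  calc ∫⁻ t in Ioi (1 : ℝ), ENNReal.ofReal t ^ c * φ t / ENNReal.ofReal t
      ≤ ∫⁻ t in Ioi (1 : ℝ), M * ENNReal.ofReal (t ^ (c - b - 1)) :=
        setLIntegral_mono' measurableSet_Ioi fun t ht =>
          ofReal_rpow_mul_div_self_le (one_pos.trans ht) (hφ t ht)
    _ = ENNReal.ofReal (1 / (b - c)) * M := by
        rw [lintegral_const_mul _ (by fun_prop), lintegral_Ioi_rpow (by linarith) one_pos,
          mul_comm, sub_add_cancel, Real.one_rpow, neg_div, ← div_neg, neg_sub]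

end Integrals

lemma toReal_one_div_lt_toReal_one_div {p q : ℝ≥0∞} (hp : 0 < p) (h : p < q) :
    (1 / q).toReal < (1 / p).toReal := by
  simp only [one_div]
  exact (ENNReal.toReal_lt_toReal (by simpa using (hp.trans h).ne') (by simpa using hp.ne')).mpr
    (ENNReal.inv_lt_inv.mpr h)

section Lorentz

variable [NNNorm ε] {μ : Measure α} {p : ℝ≥0∞}

lemma lorentzNorm_one_eq_add (hp : p ≠ ∞) (f : α → ε) :
    lorentzNorm μ p 1 f =
      (∫⁻ t in Ioc (0 : ℝ) 1,
          ENNReal.ofReal t ^ (1 / p).toReal * rearr μ f (ENNReal.ofReal t) / ENNReal.ofReal t)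
        + ∫⁻ t in Ioi (1 : ℝ),
          ENNReal.ofReal t ^ (1 / p).toReal * rearr μ f (ENNReal.ofReal t) / ENNReal.ofReal t := by
  rw [lorentzNorm, if_neg hp, if_neg one_ne_top, ← Ioc_union_Ioi_eq_Ioi zero_le_one,
    lintegral_union measurableSet_Ioi Ioc_disjoint_Ioi_same]
  simp

lemma rpow_mul_rearr_le_lorentzNorm_top (p : ℝ≥0∞) (f : α → ε) (t : ℝ≥0∞) :
    t ^ (1 / p).toReal * rearr μ f t ≤ lorentzNorm μ p ∞ f := by
  rcases eq_or_ne p ∞ with rfl | hp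
  · simpa [lorentzNorm] using rearr_antitone (zero_le : 0 ≤ t)
  · rw [lorentzNorm, if_neg hp, if_pos rfl]
    exact le_iSup (fun t => t ^ (1 / p).toReal * rearr μ f t) t

lemma rearr_ofReal_le_lorentzNorm_top (f : α → ε) {t : ℝ} (ht : 0 < t) :
    rearr μ f (ENNReal.ofReal t)
      ≤ lorentzNorm μ p ∞ f * ENNReal.ofReal (t ^ (-(1 / p).toReal)) :=
  calc rearr μ f (ENNReal.ofReal t)
      = ENNReal.ofReal (t ^ (-(1 / p).toReal))
          * (ENNReal.ofReal t ^ (1 / p).toReal * rearr μ f (ENNReal.ofReal t)) := by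
        rw [ENNReal.ofReal_rpow_of_pos ht, ← mul_assoc, ← ENNReal.ofReal_mul (by positivity),
          ← Real.rpow_add ht, neg_add_cancel, Real.rpow_zero, ENNReal.ofReal_one, one_mul]
    _ ≤ lorentzNorm μ p ∞ f * ENNReal.ofReal (t ^ (-(1 / p).toReal)) := by
        rw [mul_comm]; gcongr; exact rpow_mul_rearr_le_lorentzNorm_top p f _

lemma ofReal_rpow_div_mul_rearr_rpow_le {a r T : ℝ} (ha : 0 < a) (hr : 0 < r) (hT : 0 < T)
    (f : α → ε) :
    ENNReal.ofReal (T ^ (a * r) / (a * r)) * rearr μ f (ENNReal.ofReal T) ^ r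
      ≤ ∫⁻ t in Ioi (0 : ℝ),
          (ENNReal.ofReal t ^ a * rearr μ f (ENNReal.ofReal t)) ^ r / ENNReal.ofReal t :=
  calc ENNReal.ofReal (T ^ (a * r) / (a * r)) * rearr μ f (ENNReal.ofReal T) ^ r
      = ∫⁻ t in Ioc (0 : ℝ) T,
          ENNReal.ofReal (t ^ (a * r - 1)) * rearr μ f (ENNReal.ofReal T) ^ r := by
        rw [lintegral_mul_const _ (by fun_prop),
          lintegral_Ioc_zero_rpow (by nlinarith) hT, sub_add_cancel]
    _ ≤ ∫⁻ t in Ioc (0 : ℝ) T,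
          (ENNReal.ofReal t ^ a * rearr μ f (ENNReal.ofReal t)) ^ r / ENNReal.ofReal t := by
        refine setLIntegral_mono' measurableSet_Ioc fun t ht => ?_
        rw [ENNReal.mul_rpow_of_nonneg _ _ hr.le, ← ENNReal.rpow_mul,
          ofReal_rpow_mul_div_self ht.1]
        gcongr
        exact rearr_antitone (ENNReal.ofReal_le_ofReal ht.2)
    _ ≤ _ := lintegral_mono_set Ioc_subset_Ioi_self

lemma lorentzNorm_top_le_mul_lorentzNorm {r : ℝ≥0∞} (hp0 : p ≠ 0) (hp : p ≠ ∞) (hr0 : r ≠ 0)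
    (hr : r ≠ ∞) (f : α → ε) :
    lorentzNorm μ p ∞ f
      ≤ ENNReal.ofReal (((1 / p).toReal * r.toReal) ^ (1 / r.toReal)) * lorentzNorm μ p r f := by
  set a := (1 / p).toReal
  set r' := r.toReal
  have ha : 0 < a := ENNReal.toReal_pos (by simp [hp]) (by simp [hp0])
  have hr' : 0 < r' := ENNReal.toReal_pos hr0 hr
  rw [lorentzNorm, if_neg hp, if_pos rfl, lorentzNorm, if_neg hp, if_neg hr]
  refine iSup_le fun t => ?_
  rcases eq_or_ne t 0 with rfl | ht0
  · rw [ENNReal.zero_rpow_of_pos ha, zero_mul]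
    exact zero_le
  rcases eq_or_ne t ∞ with rfl | htop
  · simp [rearr_top]
  obtain ⟨T, hT, rfl⟩ : ∃ T : ℝ, 0 < T ∧ t = ENNReal.ofReal T :=
    ⟨t.toReal, ENNReal.toReal_pos ht0 htop, (ENNReal.ofReal_toReal htop).symm⟩
  have hpow : (ENNReal.ofReal T ^ a * rearr μ f (ENNReal.ofReal T)) ^ r'
      ≤ ENNReal.ofReal (a * r') * ∫⁻ t in Ioi (0 : ℝ),
          (ENNReal.ofReal t ^ a * rearr μ f (ENNReal.ofReal t)) ^ r' / ENNReal.ofReal t :=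
    calc (ENNReal.ofReal T ^ a * rearr μ f (ENNReal.ofReal T)) ^ r'
        = ENNReal.ofReal (a * r')
            * (ENNReal.ofReal (T ^ (a * r') / (a * r')) * rearr μ f (ENNReal.ofReal T) ^ r') := by
          rw [ENNReal.mul_rpow_of_nonneg _ _ hr'.le, ← ENNReal.rpow_mul,
            ENNReal.ofReal_rpow_of_pos hT, ← mul_assoc, ← ENNReal.ofReal_mul (by positivity),
            mul_div_cancel₀ _ (by positivity)]
      _ ≤ _ := by gcongr; exact ofReal_rpow_div_mul_rearr_rpow_le ha hr' hT f
  calc ENNReal.ofReal T ^ a * rearr μ f (ENNReal.ofReal T)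
      = ((ENNReal.ofReal T ^ a * rearr μ f (ENNReal.ofReal T)) ^ r') ^ (1 / r') := by
        rw [← ENNReal.rpow_mul, mul_one_div_cancel hr'.ne', ENNReal.rpow_one]
    _ ≤ _ := by
        grw [hpow, ENNReal.mul_rpow_of_nonneg _ _ (by positivity),
          ENNReal.ofReal_rpow_of_pos (by positivity)]

lemma lorentzNorm_top_lt_top {r : ℝ≥0∞} {f : α → ε} (hp0 : p ≠ 0) (hr : 0 < r)
    (h : lorentzNorm μ p r f < ∞) : lorentzNorm μ p ∞ f < ∞ := by
  rcases eq_or_ne p ∞ with rfl | hp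
  · simpa [lorentzNorm] using h
  rcases eq_or_ne r ∞ with rfl | hr'
  · exact h
  exact (lorentzNorm_top_le_mul_lorentzNorm hp0 hp hr.ne' hr' f).trans_lt
    (ENNReal.mul_lt_top ENNReal.ofReal_lt_top h)

end Lorentz

section Decomposition

variable {E : Type*} [NormedAddCommGroup E] {μ : Measure α} {p₀ p p₁ : ℝ≥0∞}

lemma rearr_indicator_eq_zero {f : α → E} {s : Set α} {t : ℝ≥0∞} (h : μ s ≤ t) :
    rearr μ (s.indicator f) t = 0 := by
  refine nonpos_iff_eq_zero.mp (rearr_le_of_measure_le ((measure_mono fun x hx => ?_).trans h))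
  by_contra hxs
  simp [hxs] at hx

lemma enorm_sub_indicator_le {β : Type*} (f : β → E) (s : Set β) (x : β) :
    ‖f x - s.indicator f x‖ₑ ≤ ‖f x‖ₑ := by
  rw [← Pi.sub_apply, ← indicator_compl]
  exact enorm_indicator_le_enorm_self f x

lemma enorm_sub_indicator_lt_le {β : Type*} (f : β → E) (c : ℝ≥0∞) (x : β) :
    ‖f x - {x | c < ‖f x‖ₑ}.indicator f x‖ₑ ≤ c := by
  by_cases hx : c < ‖f x‖ₑ
  · simp [indicator_of_mem (show x ∈ {x | c < ‖f x‖ₑ} from hx)]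
  · rw [indicator_of_notMem (show x ∉ {x | c < ‖f x‖ₑ} from hx), sub_zero]
    exact not_lt.mp hx

lemma lorentzNorm_one_indicator_le (h0 : 0 < p₀) (h : p₀ < p) {s : Set α} (hs : μ s ≤ 1)
    (f : α → E) :
    lorentzNorm μ p₀ 1 (s.indicator f)
      ≤ ENNReal.ofReal (1 / ((1 / p₀).toReal - (1 / p).toReal)) * lorentzNorm μ p ∞ f := by
  have htail : ∫⁻ t in Ioi (1 : ℝ), ENNReal.ofReal t ^ (1 / p₀).toReal
      * rearr μ (s.indicator f) (ENNReal.ofReal t) / ENNReal.ofReal t = 0 := by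
    refine (setLIntegral_congr_fun measurableSet_Ioi fun t ht => ?_).trans lintegral_zero
    simp [rearr_indicator_eq_zero (hs.trans (ENNReal.one_le_ofReal.mpr (le_of_lt ht)))]
  rw [lorentzNorm_one_eq_add h.ne_top, htail, add_zero]
  exact setLIntegral_Ioc_zero_one_le (toReal_one_div_lt_toReal_one_div h0 h) fun t ht =>
    (rearr_le_rearr_of_enorm_le (enorm_indicator_le_enorm_self f) _).trans
      (rearr_ofReal_le_lorentzNorm_top f ht.1)

lemma lorentzNorm_one_le_of_enorm_le (h0 : 0 < p) (h : p < p₁) {f g : α → E}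
    (hgf : ∀ x, ‖g x‖ₑ ≤ ‖f x‖ₑ) (hg : ∀ x, ‖g x‖ₑ ≤ rearr μ f 1) :
    lorentzNorm μ p₁ 1 g
      ≤ (ENNReal.ofReal (1 / (1 / p₁).toReal)
          + ENNReal.ofReal (1 / ((1 / p).toReal - (1 / p₁).toReal)) + 1)
        * lorentzNorm μ p ∞ f := by
  have hg_le : ∀ t, rearr μ g t ≤ lorentzNorm μ p ∞ f := fun t =>
    (rearr_le_of_enorm_le hg).trans (by simpa using rpow_mul_rearr_le_lorentzNorm_top p f 1)
  rcases eq_or_ne p₁ ∞ with rfl | hp₁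
  · rw [lorentzNorm, if_pos rfl]
    exact (hg_le 0).trans (le_mul_of_one_le_left zero_le le_add_self)
  have hpos : 0 < (1 / p₁).toReal := ENNReal.toReal_pos (by simp [hp₁]) (by simp [(h0.trans h).ne'])
  calc lorentzNorm μ p₁ 1 g
      ≤ ENNReal.ofReal (1 / ((1 / p₁).toReal - 0)) * lorentzNorm μ p ∞ f
        + ENNReal.ofReal (1 / ((1 / p).toReal - (1 / p₁).toReal)) * lorentzNorm μ p ∞ f := by
        rw [lorentzNorm_one_eq_add hp₁]
        gcongr
        · exact setLIntegral_Ioc_zero_one_le hpos fun t _ => by simpa using hg_le _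
        · exact setLIntegral_Ioi_one_le (toReal_one_div_lt_toReal_one_div h0 h) fun t ht =>
            (rearr_le_rearr_of_enorm_le hgf _).trans
              (rearr_ofReal_le_lorentzNorm_top f (one_pos.trans ht))
    _ ≤ _ := by
        rw [sub_zero, ← add_mul]
        gcongr ?_ * _
        exact le_self_add

end Decomposition

/-- The decomposition `f = f₀ + f₁` with `f₀ = f χ_{{|f| > f*(1)}}` satisfies
`‖f₀‖_{L^{p₀,1}} + ‖f₁‖_{L^{p₁,1}} ≤ C(p,p₀,p₁) ‖f‖_{L^{p,∞}}`; in particular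
`L^{p,r} ⊆ L^{p₀,1} + L^{p₁,1}`. -/
theorem stmt9 (p₀ p p₁ : ℝ≥0∞) (h0 : 0 < p₀) (h01 : p₀ < p) (h1 : p < p₁) :
    ∃ C : ℝ≥0∞, 0 < C ∧ C < ∞ ∧
      ∀ (X : Type) (_ : MeasurableSpace X) (μ : Measure X), SigmaFinite μ →
        ∀ f : X → ℂ, Measurable f →
          (lorentzNorm μ p₀ 1
              (({x | rearr μ f 1 < (‖f x‖₊ : ℝ≥0∞)} : Set X).indicator f)
            + lorentzNorm μ p₁ 1
              (fun x => f x -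
                (({x | rearr μ f 1 < (‖f x‖₊ : ℝ≥0∞)} : Set X).indicator f) x)
            ≤ C * lorentzNorm μ p ∞ f) ∧
          (∀ r : ℝ≥0∞, 0 < r → lorentzNorm μ p r f < ∞ →
            ∃ g h : X → ℂ, f = g + h ∧
              lorentzNorm μ p₀ 1 g < ∞ ∧ lorentzNorm μ p₁ 1 h < ∞) := by
  set C₀ := ENNReal.ofReal (1 / ((1 / p₀).toReal - (1 / p).toReal))
  set C₁ := ENNReal.ofReal (1 / (1 / p₁).toReal)
    + ENNReal.ofReal (1 / ((1 / p).toReal - (1 / p₁).toReal)) + 1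
  have hC : C₀ + C₁ < ∞ := by finiteness
  refine ⟨C₀ + C₁, one_pos.trans_le (le_add_self.trans le_add_self), hC,
    fun X _ μ _ f _ => ?_⟩
  set A : Set X := {x | rearr μ f 1 < ‖f x‖ₑ}
  have hsplit : lorentzNorm μ p₀ 1 (A.indicator f) + lorentzNorm μ p₁ 1 (f - A.indicator f)
      ≤ (C₀ + C₁) * lorentzNorm μ p ∞ f :=
    add_mul C₀ C₁ _ ▸ add_le_add
      (lorentzNorm_one_indicator_le h0 h01 (measure_rearr_lt_le μ f 1) f)
      (lorentzNorm_one_le_of_enorm_le (h0.trans h01) h1 (enorm_sub_indicator_le f A)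
        (enorm_sub_indicator_lt_le f (rearr μ f 1)))
  refine ⟨hsplit, fun r hr hfr => ?_⟩
  have hfin : (C₀ + C₁) * lorentzNorm μ p ∞ f < ∞ :=
    ENNReal.mul_lt_top hC (lorentzNorm_top_lt_top (h0.trans h01).ne' hr hfr)
  exact ⟨A.indicator f, f - A.indicator f, (add_sub_cancel _ f).symm,
    (le_self_add.trans hsplit).trans_lt hfin, (le_add_self.trans hsplit).trans_lt hfin⟩

end Paper
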